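/- Let w₀ : ℝ³×ℝ³ → ℝ be measurable with ‖w₀‖_{L¹_x(L^{6/5}_v)} := ∫_{ℝ³} ( ∫_{ℝ³} |w₀(x,v)|^{6/5} dv )^{5/6} dx < ∞. Then for every t > 0 the function x ↦ ∫_{ℝ³} w₀(x − t v, v) dv belongs to L^{6/5}(ℝ³) and ‖ ∫_{ℝ³} w₀(x − t v, v) dv ‖_{L^{6/5}(ℝ³_x)} ≤ t^{-1/2} ‖w₀‖_{L¹_x(L^{6/5}_v)}. -/

import Mathlib

/-!
Substituting `u = x - t v` gives `∫ w₀(x - t v, v) dv = t⁻ᵈ ∫ w₀(u, (x - u)/t) du`. Minkowski's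
integral inequality moves the `L^p_x` norm inside the `u`-integral, and the `L^p_x` norm of
`x ↦ w₀(u, (x - u)/t)` is `t^{d/p} ‖w₀(u, ·)‖_{L^p}`. Hence the factor `t^{d(1/p - 1)}`, which is
`t^{-1/2}` for `d = 3`, `p = 6/5`.

Minkowski's inequality itself comes from Hölder's: if `Ψ ≤ ∫ F(·, y) dy` and `‖Ψ‖_p < ∞`, then
`‖Ψ‖_p^p ≤ ∫∫ Ψ^{p-1} F ≤ ‖Ψ‖_p^{p-1} ∫ ‖F(·, y)‖_p dy`; on a σ-finite space such `Ψ^p`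
exhaust `(∫ F(·, y) dy)^p` from below.
-/

open MeasureTheory Real Filter ENNReal

noncomputable section

abbrev E3 := EuclideanSpace ℝ (Fin 3)

/-- The mixed norm `‖w₀‖_{L¹_x(L^{6/5}_v)} = ∫ (∫ |w₀(x,v)|^{6/5} dv)^{5/6} dx`. -/
def mixedNorm (w₀ : E3 × E3 → ℝ) : ℝ≥0∞ :=
  ∫⁻ x : E3, (∫⁻ v : E3, (‖w₀ (x, v)‖₊ : ℝ≥0∞) ^ ((6:ℝ)/5)) ^ ((5:ℝ)/6)

open Module

section Minkowski

variable {α β : Type*} [MeasurableSpace α] [MeasurableSpace β] {μ : Measure α} {ν : Measure β}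

theorem lintegral_le_of_forall_lintegral_ne_top [SigmaFinite μ] {f : α → ℝ≥0∞} {C : ℝ≥0∞}
    (h : ∀ g : α → ℝ≥0∞, Measurable g → g ≤ f → ∫⁻ x, g x ∂μ ≠ ∞ → ∫⁻ x, g x ∂μ ≤ C) :
    ∫⁻ x, f x ∂μ ≤ C := by
  by_contra! hC
  rw [lintegral_eq_nnreal] at hC
  obtain ⟨φ, hC⟩ := lt_iSup_iff.1 hC
  obtain ⟨hφf, hC⟩ := lt_iSup_iff.1 hC
  rw [← SimpleFunc.lintegral_eq_lintegral] at hC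
  obtain ⟨g, hgφ, hg_fin, hCg⟩ :=
    SimpleFunc.exists_lt_lintegral_simpleFunc_of_lt_lintegral (f := φ) (by simpa using hC)
  refine (h (fun x => g x) g.measurable.coe_nnreal_ennreal (fun x => ?_) hg_fin.ne).not_gt hCg
  exact (ENNReal.coe_le_coe.2 (hgφ x)).trans (hφf x)

theorem eLpNorm'_le_of_le_lintegral [SFinite μ] [SFinite ν] {p : ℝ} (hp : 1 < p)
    {F : α → β → ℝ≥0∞} (hF : Measurable (Function.uncurry F)) {Ψ : α → ℝ≥0∞}
    (hΨ : Measurable Ψ) (hΨF : ∀ x, Ψ x ≤ ∫⁻ y, F x y ∂ν) (hΨ_fin : ∫⁻ x, Ψ x ^ p ∂μ ≠ ∞) :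
    eLpNorm' Ψ p μ ≤ ∫⁻ y, eLpNorm' (F · y) p μ ∂ν := by
  have hpq : p.HolderConjugate p.conjExponent := .conjExponent hp
  set q := p.conjExponent
  simp only [eLpNorm'_eq_lintegral_enorm, enorm_eq_self]
  set A := ∫⁻ x, Ψ x ^ p ∂μ
  set B := ∫⁻ y, (∫⁻ x, F x y ^ p ∂μ) ^ (1 / p) ∂ν
  rcases eq_or_ne A 0 with hA | hA
  · rw [hA, ENNReal.zero_rpow_of_pos (by positivity)]
    exact zero_le
  have hsplit : ∀ a : ℝ≥0∞, a ^ p = a ^ (p - 1) * a := fun a => by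
    simpa using ENNReal.rpow_add_of_nonneg (x := a) (p - 1) 1 (by linarith) zero_le_one
  have hHolder : ∀ y, ∫⁻ x, Ψ x ^ (p - 1) * F x y ∂μ ≤
      A ^ (1 / q) * (∫⁻ x, F x y ^ p ∂μ) ^ (1 / p) := fun y => by
    have hΨq : ∀ x, (Ψ x ^ (p - 1)) ^ q = Ψ x ^ p := fun x => by
      rw [← ENNReal.rpow_mul, hpq.sub_one_mul_conj]
    simpa only [Pi.mul_apply, hΨq] using ENNReal.lintegral_mul_le_Lp_mul_Lq μ hpq.symm
      (hΨ.pow_const (p - 1)).aemeasurable hF.of_uncurry_right.aemeasurable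
  have hAB : A ≤ A ^ (1 / q) * B := calc
    A = ∫⁻ x, Ψ x ^ (p - 1) * Ψ x ∂μ := lintegral_congr fun x => hsplit (Ψ x)
    _ ≤ ∫⁻ x, Ψ x ^ (p - 1) * ∫⁻ y, F x y ∂ν ∂μ := by gcongr with x; exact hΨF x
    _ = ∫⁻ x, ∫⁻ y, Ψ x ^ (p - 1) * F x y ∂ν ∂μ :=
      lintegral_congr fun x => (lintegral_const_mul _ hF.of_uncurry_left).symm
    _ = ∫⁻ y, ∫⁻ x, Ψ x ^ (p - 1) * F x y ∂μ ∂ν :=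
      lintegral_lintegral_swap (((hΨ.pow_const _).comp measurable_fst).mul hF).aemeasurable
    _ ≤ ∫⁻ y, A ^ (1 / q) * (∫⁻ x, F x y ^ p ∂μ) ^ (1 / p) ∂ν := lintegral_mono hHolder
    _ = A ^ (1 / q) * B :=
      lintegral_const_mul _ ((hF.pow_const p).lintegral_prod_left'.pow_const _)
  have hAq0 : A ^ (1 / q) ≠ 0 := (ENNReal.rpow_pos (pos_iff_ne_zero.2 hA) hΨ_fin).ne'
  have hAq_top : A ^ (1 / q) ≠ ∞ :=
    ENNReal.rpow_ne_top_of_nonneg (one_div_nonneg.2 hpq.symm.nonneg) hΨ_fin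
  refine (ENNReal.mul_le_mul_iff_right hAq0 hAq_top).1 (le_trans (le_of_eq ?_) hAB)
  rw [← ENNReal.rpow_add _ _ hA hΨ_fin, one_div, one_div, hpq.symm.inv_add_inv_eq_one,
    ENNReal.rpow_one]

/-- **Minkowski's integral inequality**. -/
theorem eLpNorm'_lintegral_le [SigmaFinite μ] [SFinite ν] {p : ℝ} (hp : 1 ≤ p)
    {F : α → β → ℝ≥0∞} (hF : Measurable (Function.uncurry F)) :
    eLpNorm' (fun x => ∫⁻ y, F x y ∂ν) p μ ≤ ∫⁻ y, eLpNorm' (F · y) p μ ∂ν := by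
  rcases hp.eq_or_lt with rfl | hp
  · simpa [eLpNorm'_eq_lintegral_enorm] using (lintegral_lintegral_swap hF.aemeasurable).le
  have hp0 : 0 < p := zero_lt_one.trans hp
  rw [eLpNorm'_eq_lintegral_enorm, one_div, ENNReal.rpow_inv_le_iff hp0]
  refine lintegral_le_of_forall_lintegral_ne_top fun g hg hgF hg_fin => ?_
  have hroot : ∀ x, (g x ^ p⁻¹) ^ p = g x := fun x => by
    rw [← ENNReal.rpow_mul, inv_mul_cancel₀ hp0.ne', ENNReal.rpow_one]
  have hΨF : ∀ x, g x ^ p⁻¹ ≤ ∫⁻ y, F x y ∂ν := fun x =>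
    (ENNReal.rpow_inv_le_iff hp0).2 (hgF x)
  have key := eLpNorm'_le_of_le_lintegral (μ := μ) hp hF (hg.pow_const p⁻¹) hΨF
    (by simpa only [hroot] using hg_fin)
  rw [eLpNorm'_eq_lintegral_enorm] at key
  simp only [enorm_eq_self, hroot, one_div] at key
  exact (ENNReal.rpow_inv_le_iff hp0).1 key

theorem eLpNorm'_const_mul_of_ne_top {f : α → ℝ≥0∞} {c : ℝ≥0∞} (hc : c ≠ ∞) {q : ℝ}
    (hq : 0 < q) : eLpNorm' (fun x => c * f x) q μ = c * eLpNorm' f q μ := by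
  simp only [eLpNorm'_eq_lintegral_enorm, enorm_eq_self, ENNReal.mul_rpow_of_nonneg _ _ hq.le]
  rw [lintegral_const_mul' _ _ (ENNReal.rpow_ne_top_of_nonneg hq.le hc),
    ENNReal.mul_rpow_of_nonneg _ _ (by positivity), ← ENNReal.rpow_mul, mul_one_div_cancel hq.ne',
    ENNReal.rpow_one]

end Minkowski

section Transport

variable {E : Type*} [NormedAddCommGroup E] [NormedSpace ℝ E] [FiniteDimensional ℝ E]
  [MeasurableSpace E] [BorelSpace E] (μ : Measure E) [μ.IsAddHaarMeasure]

theorem lintegral_comp_inv_smul_of_pos (f : E → ℝ≥0∞) {R : ℝ} (hR : 0 < R) :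
    ∫⁻ x, f (R⁻¹ • x) ∂μ = ENNReal.ofReal (R ^ finrank ℝ E) * ∫⁻ x, f x ∂μ := by
  have hR' : R⁻¹ ≠ 0 := inv_ne_zero hR.ne'
  calc ∫⁻ x, f (R⁻¹ • x) ∂μ = ∫⁻ x, f x ∂Measure.map (R⁻¹ • ·) μ :=
        (lintegral_map_equiv f
          (Homeomorph.smul (isUnit_iff_ne_zero.2 hR').unit).toMeasurableEquiv).symm
    _ = _ := by
      rw [Measure.map_addHaar_smul μ hR', lintegral_smul_measure, inv_pow, inv_inv,
        abs_of_pos (by positivity), smul_eq_mul]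

theorem lintegral_comp_transport (g : E × E → ℝ≥0∞) {t : ℝ} (ht : 0 < t) (x : E) :
    ENNReal.ofReal (t ^ finrank ℝ E) * ∫⁻ v, g (x - t • v, v) ∂μ =
      ∫⁻ u, g (u, t⁻¹ • (x - u)) ∂μ := by
  rw [← lintegral_comp_inv_smul_of_pos μ _ ht, ← lintegral_sub_left_eq_self _ x]
  simp only [smul_inv_smul₀ ht.ne', _root_.sub_sub_cancel]

theorem eLpNorm'_comp_inv_smul_sub {ε : Type*} [ENorm ε] (f : E → ε) {t : ℝ} (ht : 0 < t)
    (u : E) {p : ℝ} (hp : 0 ≤ p) :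
    eLpNorm' (fun x => f (t⁻¹ • (x - u))) p μ =
      ENNReal.ofReal (t ^ finrank ℝ E) ^ (1 / p) * eLpNorm' f p μ := by
  simp only [eLpNorm'_eq_lintegral_enorm]
  rw [lintegral_sub_right_eq_self (fun y => ‖f (t⁻¹ • y)‖ₑ ^ p) u,
    lintegral_comp_inv_smul_of_pos μ (‖f ·‖ₑ ^ p) ht,
    ENNReal.mul_rpow_of_nonneg _ _ (by positivity)]

theorem eLpNorm'_lintegral_transport_le {g : E × E → ℝ≥0∞} (hg : Measurable g) {p : ℝ}
    (hp : 1 ≤ p) {t : ℝ} (ht : 0 < t) :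
    eLpNorm' (fun x => ∫⁻ v, g (x - t • v, v) ∂μ) p μ ≤
      ENNReal.ofReal (t ^ ((finrank ℝ E : ℝ) * (1 / p - 1))) *
        ∫⁻ u, eLpNorm' (fun v => g (u, v)) p μ ∂μ := by
  have hp0 : 0 < p := zero_lt_one.trans_le hp
  set c := ENNReal.ofReal (t ^ finrank ℝ E)
  have hc0 : c ≠ 0 := (ENNReal.ofReal_pos.2 (by positivity)).ne'
  have hc_top : c ≠ ∞ := ENNReal.ofReal_ne_top
  set F : E → E → ℝ≥0∞ := fun x u => g (u, t⁻¹ • (x - u))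
  have hF : Measurable (Function.uncurry F) :=
    hg.comp (measurable_snd.prodMk ((measurable_fst.sub measurable_snd).const_smul t⁻¹))
  have hsubst : (fun x => ∫⁻ v, g (x - t • v, v) ∂μ) = fun x => c⁻¹ * ∫⁻ u, F x u ∂μ :=
    funext fun x => by
      rw [← lintegral_comp_transport μ g ht x, ← mul_assoc, ENNReal.inv_mul_cancel hc0 hc_top,
        one_mul]
  have hconst : c⁻¹ * c ^ (1 / p) = ENNReal.ofReal (t ^ ((finrank ℝ E : ℝ) * (1 / p - 1))) := by
    rw [← ENNReal.ofReal_inv_of_pos (by positivity), ENNReal.ofReal_rpow_of_pos (by positivity),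
      ← ENNReal.ofReal_mul (by positivity), ← Real.rpow_natCast, ← Real.rpow_neg ht.le,
      ← Real.rpow_mul ht.le, ← Real.rpow_add ht]
    congr 2
    ring
  calc eLpNorm' (fun x => ∫⁻ v, g (x - t • v, v) ∂μ) p μ
      = c⁻¹ * eLpNorm' (fun x => ∫⁻ u, F x u ∂μ) p μ := by
        rw [hsubst, eLpNorm'_const_mul_of_ne_top (ENNReal.inv_ne_top.2 hc0) hp0]
    _ ≤ c⁻¹ * ∫⁻ u, eLpNorm' (F · u) p μ ∂μ := by
        gcongr
        exact eLpNorm'_lintegral_le hp hF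
    _ = c⁻¹ * ∫⁻ u, c ^ (1 / p) * eLpNorm' (fun v => g (u, v)) p μ ∂μ := by
        congr 1
        exact lintegral_congr fun u => eLpNorm'_comp_inv_smul_sub μ (fun v => g (u, v)) ht u hp0.le
    _ = _ := by
        rw [lintegral_const_mul' _ _ (ENNReal.rpow_ne_top_of_nonneg (by positivity) hc_top),
          ← mul_assoc, hconst]

theorem eLpNorm_integral_transport_le {F : Type*} [NormedAddCommGroup F] [NormedSpace ℝ F]
    [MeasurableSpace F] [OpensMeasurableSpace F] {w : E × E → F} (hw : Measurable w) {p : ℝ}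
    (hp : 1 ≤ p) {t : ℝ} (ht : 0 < t) :
    eLpNorm (fun x => ∫ v, w (x - t • v, v) ∂μ) (ENNReal.ofReal p) μ ≤
      ENNReal.ofReal (t ^ ((finrank ℝ E : ℝ) * (1 / p - 1))) *
        ∫⁻ u, eLpNorm' (fun v => w (u, v)) p μ ∂μ := by
  have hp0 : 0 < p := zero_lt_one.trans_le hp
  rw [eLpNorm_eq_eLpNorm' (by simpa using hp0) ENNReal.ofReal_ne_top, ENNReal.toReal_ofReal hp0.le]
  calc eLpNorm' (fun x => ∫ v, w (x - t • v, v) ∂μ) p μ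
      ≤ eLpNorm' (fun x => ∫⁻ v, ‖w (x - t • v, v)‖ₑ ∂μ) p μ :=
        eLpNorm'_mono_enorm_ae hp0.le
          (Eventually.of_forall fun x => enorm_integral_le_lintegral_enorm _)
    _ ≤ _ := by simpa only [eLpNorm'_enorm] using eLpNorm'_lintegral_transport_le μ hw.enorm hp ht

end Transport

/-- Strichartz estimate for the free transport flow:
`‖∫ w₀(x−tv,v) dv‖_{L^{6/5}_x} ≤ t^{−1/2} ‖w₀‖_{L¹_x(L^{6/5}_v)}`. -/
theorem free_transport_strichartz (w₀ : E3 × E3 → ℝ) (hmeas : Measurable w₀)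
    (hfin : mixedNorm w₀ < ⊤) :
    ∀ t : ℝ, 0 < t →
      MemLp (fun x : E3 => ∫ v : E3, w₀ (x - t • v, v)) (ENNReal.ofReal (6/5)) volume ∧
      eLpNorm (fun x : E3 => ∫ v : E3, w₀ (x - t • v, v)) (ENNReal.ofReal (6/5)) volume ≤
        ENNReal.ofReal (t ^ (-(1:ℝ)/2)) * mixedNorm w₀ := by
  intro t ht
  have hbound := eLpNorm_integral_transport_le volume hmeas (p := 6 / 5) (by norm_num) ht
  have hmixed : ∫⁻ u, eLpNorm' (fun v => w₀ (u, v)) (6 / 5) volume = mixedNorm w₀ := by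
    simp only [eLpNorm'_eq_lintegral_enorm, mixedNorm]
    norm_num
    rfl
  have hexp : (finrank ℝ E3 : ℝ) * (1 / (6 / 5) - 1) = -(1 : ℝ) / 2 := by
    rw [finrank_euclideanSpace_fin]
    norm_num
  rw [hmixed, hexp] at hbound
  have hmeas_int : StronglyMeasurable (fun x : E3 => ∫ v : E3, w₀ (x - t • v, v)) :=
    (hmeas.comp ((measurable_fst.sub (measurable_snd.const_smul t)).prodMk
      measurable_snd)).stronglyMeasurable.integral_prod_right'
  exact ⟨⟨hmeas_int.aestronglyMeasurable,
    hbound.trans_lt (ENNReal.mul_lt_top ENNReal.ofReal_lt_top hfin)⟩, hbound⟩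

end
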